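/- arXiv:2312.01852 — 7 statements merged into one kernel-verified Lean document; each statement's English description precedes it below -/
import Mathlib

section
/- If γ is a modulus of total boundedness for A ⊆ X and φ is uniformly consistent with moduli λ, Λ, then γ'(k) = γ(Λ(k)) is a modulus of total φ-boundedness for A: for any sequence (x_n) ⊆ A and any k, there exist 0 ≤ i < j ≤ γ'(k) with φ(x_j, x_i) ≤ 1/(k+1). -/
theorem stmt_7 {X : Type*} [MetricSpace X] (A : Set X) (hA : A.Nonempty)
    (φ : X → X → ℝ) (γ l L : ℕ → ℕ)
    (hγ : ∀ (k : ℕ) (u : ℕ → X), (∀ n, u n ∈ A) →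
      ∃ i j, i < j ∧ j ≤ γ k ∧ dist (u i) (u j) ≤ 1 / ((k : ℝ) + 1))
    (hl : ∀ (k : ℕ) (x y : X), φ x y ≤ 1 / ((l k : ℝ) + 1) → dist x y ≤ 1 / ((k : ℝ) + 1))
    (hL : ∀ (k : ℕ) (x y : X), dist x y ≤ 1 / ((L k : ℝ) + 1) → φ x y ≤ 1 / ((k : ℝ) + 1)) :
    ∀ (k : ℕ) (u : ℕ → X), (∀ n, u n ∈ A) →
      ∃ i j, i < j ∧ j ≤ γ (L k) ∧ φ (u j) (u i) ≤ 1 / ((k : ℝ) + 1) := by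
  intro k u hu
  obtain ⟨i, j, hij, hjle, hd⟩ := hγ (L k) u hu
  exact ⟨i, j, hij, hjle, hL k _ _ (by rwa [dist_comm])⟩
end

section
/- If φ is a modulus of regularity for F w.r.t. zer F and S, and φ is uniformly consistent with moduli λ, Λ : ℝ₊* → ℝ₊*, then ρ'(ε) = ρ(Λ(ε/2)) is a modulus of φ-regularity for F w.r.t. zer F and S: for all ε > 0 and x ∈ S, |F(x)| < ρ'(ε) implies inf_{y ∈ zer F} φ(y,x) < ε. -/
theorem stmt_9 {X : Type*} [MetricSpace X] (F : X → EReal) (S : Set X)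
    (φ : X → X → ℝ)
    (zerF : Set X) (hzer : zerF = {x | F x = 0}) (hne : zerF.Nonempty)
    (ρ lam Lam : ℝ → ℝ)
    (hρpos : ∀ ε : ℝ, 0 < ε → 0 < ρ ε)
    (hlampos : ∀ ε : ℝ, 0 < ε → 0 < lam ε)
    (hLampos : ∀ ε : ℝ, 0 < ε → 0 < Lam ε)
    (hρ : ∀ ε : ℝ, 0 < ε → ∀ x ∈ S,
      max (F x) (-F x) < ((ρ ε : ℝ) : EReal) → Metric.infDist x zerF < ε)
    (hlam : ∀ ε : ℝ, 0 < ε → ∀ x y : X, φ x y ≤ lam ε → dist x y ≤ ε)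
    (hLam : ∀ ε : ℝ, 0 < ε → ∀ x y : X, dist x y ≤ Lam ε → φ x y ≤ ε) :
    ∀ ε : ℝ, 0 < ε → ∀ x ∈ S,
      max (F x) (-F x) < ((ρ (Lam (ε / 2)) : ℝ) : EReal) →
      sInf ((fun y => φ y x) '' zerF) < ε := by
  intro ε hε x hxS hF
  have hΛ : 0 < Lam (ε / 2) := hLampos _ (by linarith)
  have hinf : Metric.infDist x zerF < Lam (ε / 2) := hρ _ hΛ x hxS hF
  obtain ⟨y, hy, hdy⟩ := (Metric.infDist_lt_iff hne).mp hinf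
  have hφ : φ y x ≤ ε / 2 := hLam _ (by linarith) y x (by rw [dist_comm]; linarith)
  by_cases hb : BddBelow ((fun y => φ y x) '' zerF)
  · calc sInf ((fun y => φ y x) '' zerF) ≤ φ y x := csInf_le hb ⟨y, hy, rfl⟩
      _ < ε := by linarith
  · rw [Real.sInf_of_not_bddBelow hb]; exact hε
end

section
/- Under the same iteration with x̂ a fixed point of T and b ≥ ‖x⁰ − x̂‖, for every k ≥ 1 there exists 0 ≤ i ≤ k−1 with ‖x^{2i+2} − x̄^{2i+1}‖² ≤ (α/(1−α)) b²/k. -/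
/-! Putting `y = x̂` in the averagedness inequality gives `‖T z - x̂‖² + κ ‖T z - z‖² ≤ ‖z - x̂‖²`
with `κ = (1 - α) / α`. An extrapolated point `T z + t (T z - z)` with `0 ≤ t ≤ κ` is still no
farther from `x̂` than `z`, so each pair of steps decreases `‖x^{2i} - x̂‖²` by at least
`κ ‖x^{2i+2} - x̄^{2i+1}‖²`. Telescoping bounds the sum of the first `k` residuals by `b² / κ`, and
the smallest one is at most their average. -/

open Finset

theorem norm_sub_fixedPoint_sq_add_residual_le {X : Type*} [SeminormedAddCommGroup X] {α : ℝ}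
    (hα : 0 < α) {T : X → X}
    (hav : ∀ x y : X, (1 - α) * ‖(x - T x) - (y - T y)‖ ^ 2 ≤
      α * (‖x - y‖ ^ 2 - ‖T x - T y‖ ^ 2))
    {xh : X} (hfix : T xh = xh) (z : X) :
    ‖T z - xh‖ ^ 2 + (1 - α) / α * ‖T z - z‖ ^ 2 ≤ ‖z - xh‖ ^ 2 := by
  have h := hav z xh
  rw [hfix, sub_self, sub_zero, ← norm_neg, neg_sub] at h
  rw [div_mul_eq_mul_div, ← le_sub_iff_add_le', div_le_iff₀ hα]
  linarith

theorem norm_extrapolate_sub_sq_le {X : Type*} [SeminormedAddCommGroup X]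
    [InnerProductSpace ℝ X] {κ t : ℝ} {u v w : X}
    (hstep : ‖v - w‖ ^ 2 + κ * ‖v - u‖ ^ 2 ≤ ‖u - w‖ ^ 2) (ht : 0 ≤ t) (htκ : t ≤ κ) :
    ‖v + t • (v - u) - w‖ ^ 2 ≤ ‖u - w‖ ^ 2 := by
  have hext : v + t • (v - u) - w = (v - w) + t • (v - u) := by abel
  have hprev : u - w = (v - w) - (v - u) := by abel
  rw [hprev, norm_sub_sq_real (v - w) (v - u)] at hstep ⊢
  rw [hext, norm_add_sq_real, inner_smul_right, norm_smul, Real.norm_eq_abs, abs_of_nonneg ht]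
  -- `hstep` says `2 ⟪v - w, v - u⟫ ≤ (1 - κ) ‖v - u‖²`; multiply by `1 + t` and use `t ≤ κ`.
  have hd : 0 ≤ ‖v - u‖ ^ 2 := sq_nonneg _
  nlinarith [mul_nonneg (sub_nonneg.2 htκ) hd, mul_nonneg ht (mul_nonneg (sub_nonneg.2 htκ) hd)]

theorem norm_sub_fixedPoint_sq_add_residual_le_of_extrapolate {X : Type*}
    [SeminormedAddCommGroup X] [InnerProductSpace ℝ X] {α : ℝ} (hα : 0 < α) {T : X → X}
    (hav : ∀ x y : X, (1 - α) * ‖(x - T x) - (y - T y)‖ ^ 2 ≤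
      α * (‖x - y‖ ^ 2 - ‖T x - T y‖ ^ 2))
    {xh : X} (hfix : T xh = xh) (z : X) {t : ℝ} (ht : 0 ≤ t) (htα : t ≤ (1 - α) / α) :
    ‖T (T z + t • (T z - z)) - xh‖ ^ 2 +
      (1 - α) / α * ‖T (T z + t • (T z - z)) - (T z + t • (T z - z))‖ ^ 2 ≤ ‖z - xh‖ ^ 2 :=
  (norm_sub_fixedPoint_sq_add_residual_le hα hav hfix _).trans
    (norm_extrapolate_sub_sq_le (norm_sub_fixedPoint_sq_add_residual_le hα hav hfix z) ht htα)

theorem add_sum_range_le_of_succ_add_le {f g : ℕ → ℝ} (h : ∀ i, f (i + 1) + g i ≤ f i) (n : ℕ) :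
    f n + ∑ i ∈ range n, g i ≤ f 0 := by
  induction n with
  | zero => simp
  | succ n ih => rw [sum_range_succ]; linarith [h n]

theorem exists_lt_le_div_of_sum_range_le {s : ℕ → ℝ} {C : ℝ} {k : ℕ} (hk : 0 < k)
    (h : ∑ i ∈ range k, s i ≤ C) : ∃ i < k, s i ≤ C / k := by
  have hsum : ∑ i ∈ range k, s i ≤ ∑ _i ∈ range k, C / k := by
    rw [sum_const, card_range, nsmul_eq_mul, mul_div_cancel₀ _ (by positivity)]
    exact h
  obtain ⟨i, hi, hle⟩ := exists_le_of_sum_le (nonempty_range_iff.2 hk.ne') hsum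
  exact ⟨i, mem_range.1 hi, hle⟩

theorem stmt_12 {X : Type*} [NormedAddCommGroup X] [InnerProductSpace ℝ X]
    (α : ℝ) (hα : 0 < α) (hα1 : α < 1) (T : X → X)
    (hav : ∀ x y : X, (1 - α) * ‖(x - T x) - (y - T y)‖ ^ 2 ≤
      α * (‖x - y‖ ^ 2 - ‖T x - T y‖ ^ 2))
    (αk : ℕ → ℝ) (hαk : ∀ k, 0 ≤ αk k ∧ αk k ≤ (1 - α) / α)
    (xh : X) (hfix : T xh = xh)
    (x xb : ℕ → X)
    (b : ℝ) (hb : ‖x 0 - xh‖ ≤ b)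
    (hxb : ∀ k, xb k = if Even k then x k else x k + αk k • (x k - x (k - 1)))
    (hx : ∀ k, x (k + 1) = T (xb k)) :
    ∀ k : ℕ, 1 ≤ k → ∃ i ≤ k - 1,
      ‖x (2 * i + 2) - xb (2 * i + 1)‖ ^ 2 ≤ (α / (1 - α)) * b ^ 2 / k := by
  set κ := (1 - α) / α
  have pair : ∀ i : ℕ, ‖x (2 * (i + 1)) - xh‖ ^ 2 + κ * ‖x (2 * i + 2) - xb (2 * i + 1)‖ ^ 2 ≤
      ‖x (2 * i) - xh‖ ^ 2 := by
    intro i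
    have hodd : xb (2 * i + 1) = T (x (2 * i)) + αk (2 * i + 1) • (T (x (2 * i)) - x (2 * i)) := by
      simp [hxb, hx]
    rw [mul_add_one, hx, hodd]
    exact norm_sub_fixedPoint_sq_add_residual_le_of_extrapolate hα hav hfix _
      (hαk (2 * i + 1)).1 (hαk (2 * i + 1)).2
  intro k hk
  set S := ∑ i ∈ range k, ‖x (2 * i + 2) - xb (2 * i + 1)‖ ^ 2
  have hκS : κ * S ≤ b ^ 2 := by
    have htele := add_sum_range_le_of_succ_add_le
      (f := fun i ↦ ‖x (2 * i) - xh‖ ^ 2) (g := fun i ↦ κ * ‖x (2 * i + 2) - xb (2 * i + 1)‖ ^ 2)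
      pair k
    rw [← mul_sum] at htele
    nlinarith [sq_nonneg ‖x (2 * k) - xh‖, pow_le_pow_left₀ (norm_nonneg _) hb 2]
  have hS : S ≤ α / (1 - α) * b ^ 2 := calc
    S = α / (1 - α) * (κ * S) := by
      simp only [κ]; field_simp [(by linarith : 1 - α ≠ 0)]
    _ ≤ α / (1 - α) * b ^ 2 := by gcongr
  obtain ⟨i, hik, hi⟩ := exists_lt_le_div_of_sum_range_le hk hS
  exact ⟨i, by omega, hi⟩
end

section
/- Under the same iteration with b ≥ ‖x⁰ − x̂‖, the function Φ(k) = 2·max{1, ⌈(α/(1−α)) b² (k+1)²⌉} is an approximate fixed-point bound for (x^{2n}): for every k ∈ ℕ there exists an even index N ≤ Φ(k) such that ‖x^N − T x^N‖ ≤ 1/(k+1). -/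
lemma aux_id13 {X : Type*} [NormedAddCommGroup X] [InnerProductSpace ℝ X]
    (a c : X) (t : ℝ) :
    ‖a + t • (a - c)‖ ^ 2 = (1 + t) * ‖a‖ ^ 2 - t * ‖c‖ ^ 2 + t * (1 + t) * ‖a - c‖ ^ 2 := by
  rw [@norm_add_sq_real, real_inner_smul_right, inner_sub_right,
    real_inner_self_eq_norm_sq, norm_smul, Real.norm_eq_abs, mul_pow, sq_abs,
    @norm_sub_sq_real]
  ring

theorem stmt_13 {X : Type*} [NormedAddCommGroup X] [InnerProductSpace ℝ X]
    (α : ℝ) (hα : 0 < α) (hα1 : α < 1) (T : X → X)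
    (hav : ∀ x y : X, (1 - α) * ‖(x - T x) - (y - T y)‖ ^ 2 ≤
      α * (‖x - y‖ ^ 2 - ‖T x - T y‖ ^ 2))
    (αk : ℕ → ℝ) (hαk : ∀ k, 0 ≤ αk k ∧ αk k ≤ (1 - α) / α)
    (xh : X) (hfix : T xh = xh)
    (x xb : ℕ → X)
    (b : ℝ) (hb : ‖x 0 - xh‖ ≤ b)
    (hxb : ∀ k, xb k = if Even k then x k else x k + αk k • (x k - x (k - 1)))
    (hx : ∀ k, x (k + 1) = T (xb k)) :
    ∀ k : ℕ, ∃ N ≤ 2 * max 1 ⌈(α / (1 - α)) * b ^ 2 * ((k : ℝ) + 1) ^ 2⌉₊,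
      Even N ∧ ‖x N - T (x N)‖ ≤ 1 / ((k : ℝ) + 1) := by
  have hb0 : 0 ≤ b := le_trans (norm_nonneg _) hb
  -- per-step decrease
  have key : ∀ n : ℕ, (1 - α) * ‖x (2*n+2) - T (x (2*n+2))‖ ^ 2 ≤
      α * ‖x (2*n) - xh‖ ^ 2 - α * ‖x (2*n+2) - xh‖ ^ 2 := by
    intro n
    obtain ⟨hβ0, hβ1⟩ := hαk (2*n+1)
    set β := αk (2*n+1) with hβdef
    have hw : x (2*n+1) = T (x (2*n)) := by
      rw [hx (2*n), hxb (2*n), if_pos (even_two_mul n)]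
    set u := x (2*n) with hu
    set w := x (2*n+1) with hwdef
    set xbar := w + β • (w - u) with hxbar
    have hvb : xb (2*n+1) = xbar := by
      rw [hxb (2*n+1), if_neg (by simp [parity_simps])]
      simp [hxbar, hβdef, hwdef, hu]
    have hv : x (2*n+2) = T xbar := by
      have := hx (2*n+1); rw [hvb] at this; exact this
    set v := x (2*n+2) with hvdef
    have hαβ : α * β ≤ 1 - α := by
      have := (le_div_iff₀ hα).mp hβ1; linarith
    -- h1 : even step inequality
    have h1 := hav u xh
    rw [hfix, ← hw] at h1
    simp only [sub_self, sub_zero] at h1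
    -- h2 : odd step inequality
    have h2 := hav xbar xh
    rw [hfix, ← hv] at h2
    simp only [sub_self, sub_zero] at h2
    -- h4 : residual monotone
    have h4 : ‖v - T v‖ ^ 2 ≤ ‖xbar - v‖ ^ 2 := by
      have h5 := hav xbar v
      rw [← hv] at h5
      have hge : 0 ≤ α * (‖xbar - v‖ ^ 2 - ‖v - T v‖ ^ 2) :=
        le_trans (mul_nonneg (by linarith) (sq_nonneg _)) h5
      have := (mul_nonneg_iff_of_pos_left hα).mp hge
      linarith
    -- h3 : extrapolation identity
    have h3 : ‖xbar - xh‖ ^ 2 =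
        (1 + β) * ‖w - xh‖ ^ 2 - β * ‖u - xh‖ ^ 2 + β * (1 + β) * ‖w - u‖ ^ 2 := by
      have hid := aux_id13 (w - xh) (u - xh) β
      rw [show (w - xh) - (u - xh) = w - u by abel] at hid
      rw [show (w - xh) + β • (w - u) = xbar - xh by rw [hxbar]; abel] at hid
      exact hid
    rw [h3] at h2
    -- combine
    have P1 : (1 + β) * ((1 - α) * ‖u - w‖ ^ 2) ≤
        (1 + β) * (α * (‖u - xh‖ ^ 2 - ‖w - xh‖ ^ 2)) :=
      mul_le_mul_of_nonneg_left h1 (by linarith)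
    have P2 : 0 ≤ (1 + β) * ((1 - α - α * β) * ‖w - u‖ ^ 2) := by
      have : 0 ≤ 1 - α - α * β := by linarith
      positivity
    have P3 : (1 - α) * ‖v - T v‖ ^ 2 ≤ (1 - α) * ‖xbar - v‖ ^ 2 :=
      mul_le_mul_of_nonneg_left h4 (by linarith)
    have hwu : ‖u - w‖ = ‖w - u‖ := norm_sub_rev u w
    rw [hwu] at P1
    nlinarith [P1, P2, P3, h2]
  intro k
  set c : ℝ := (α / (1 - α)) * b ^ 2 * ((k : ℝ) + 1) ^ 2 with hc
  set N := max 1 ⌈c⌉₊ with hN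
  by_contra hcon
  push_neg at hcon
  have hk1 : (0:ℝ) < (k : ℝ) + 1 := by positivity
  have hres : ∀ n, n < N → 1 / ((k:ℝ)+1) < ‖x (2*n+2) - T (x (2*n+2))‖ := by
    intro n hn
    exact hcon (2*n+2) (by omega) ⟨n+1, by ring⟩
  -- telescoping upper bound
  have hsum : ∑ n ∈ Finset.range N, ((1-α) * ‖x (2*n+2) - T (x (2*n+2))‖ ^ 2)
      ≤ α * b ^ 2 := by
    have htel : ∑ n ∈ Finset.range N,
        (α * ‖x (2*n) - xh‖ ^ 2 - α * ‖x (2*(n+1)) - xh‖ ^ 2)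
        = α * ‖x (2*0) - xh‖ ^ 2 - α * ‖x (2*N) - xh‖ ^ 2 :=
      Finset.sum_range_sub' (fun n => α * ‖x (2*n) - xh‖ ^ 2) N
    have hle : ∑ n ∈ Finset.range N, ((1-α) * ‖x (2*n+2) - T (x (2*n+2))‖ ^ 2)
        ≤ ∑ n ∈ Finset.range N,
          (α * ‖x (2*n) - xh‖ ^ 2 - α * ‖x (2*(n+1)) - xh‖ ^ 2) := by
      refine Finset.sum_le_sum fun n _ => ?_
      have h := key n
      have h2n : 2*(n+1) = 2*n+2 := by ring
      rw [h2n]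
      linarith
    have hxb2 : ‖x 0 - xh‖ ^ 2 ≤ b ^ 2 := by
      have := pow_le_pow_left₀ (norm_nonneg _) hb 2
      simpa using this
    have h0 : (2:ℕ)*0 = 0 := by norm_num
    rw [htel, h0] at hle
    nlinarith [sq_nonneg ‖x (2*N) - xh‖, norm_nonneg (x (2*N) - xh),
      sq_nonneg (‖x (2*N) - xh‖)]
  -- strict lower bound
  have hNpos : 0 < N := lt_of_lt_of_le one_pos (le_max_left 1 _)
  have hlb : (N : ℝ) * ((1-α) * (1 / ((k:ℝ)+1)) ^ 2) <
      ∑ n ∈ Finset.range N, ((1-α) * ‖x (2*n+2) - T (x (2*n+2))‖ ^ 2) := by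
    have hne : (Finset.range N).Nonempty := Finset.nonempty_range_iff.mpr (by omega)
    have hterm : ∀ i ∈ Finset.range N,
        (1-α) * (1 / ((k:ℝ)+1)) ^ 2 < (1-α) * ‖x (2*i+2) - T (x (2*i+2))‖ ^ 2 := by
      intro i hi
      have hri := hres i (Finset.mem_range.mp hi)
      have : (1 / ((k:ℝ)+1)) ^ 2 < ‖x (2*i+2) - T (x (2*i+2))‖ ^ 2 :=
        pow_lt_pow_left₀ hri (by positivity) (by norm_num)
      exact mul_lt_mul_of_pos_left this (by linarith)
    have := Finset.sum_lt_sum_of_nonempty hne hterm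
    simpa [Finset.sum_const, Finset.card_range, nsmul_eq_mul] using this
  -- contradiction
  have hNc : c ≤ (N : ℝ) := by
    refine le_trans (Nat.le_ceil c) ?_
    exact_mod_cast le_max_right 1 ⌈c⌉₊
  have h1α : (1:ℝ) - α ≠ 0 := by linarith
  have hkne : ((k:ℝ) + 1) ≠ 0 := ne_of_gt hk1
  have hcalc : c * ((1-α) * (1 / ((k:ℝ)+1)) ^ 2) = α * b ^ 2 := by
    rw [hc]
    field_simp
  have hmul : c * ((1-α) * (1 / ((k:ℝ)+1)) ^ 2) ≤
      (N : ℝ) * ((1-α) * (1 / ((k:ℝ)+1)) ^ 2) := by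
    apply mul_le_mul_of_nonneg_right hNc
    exact mul_nonneg (by linarith) (by positivity)
  linarith
end

section
/- Let X be a smooth, strictly convex, reflexive Banach space, T ⊆ X×X* maximally monotone, and suppose d ∈ Tc with ‖c‖ ≤ C, ‖d‖ ≤ D. Then for any r > 0 and x ∈ X with r ≤ R and ‖x‖ ≤ b, the resolvent J_r x = (J + rT)⁻¹ Jx satisfies ‖J_r x‖ ≤ max{(1+C)(b + RD) + C, 1}. -/
theorem stmt_16 {X : Type*} [NormedAddCommGroup X] [NormedSpace ℝ X]
    (J : X → X →L[ℝ] ℝ)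
    (hJnorm : ∀ x, ‖J x‖ = ‖x‖) (hJdual : ∀ x, J x x = ‖x‖ ^ 2)
    (T : Set (X × (X →L[ℝ] ℝ)))
    (hmono : ∀ p ∈ T, ∀ q ∈ T, 0 ≤ (p.2 - q.2) (p.1 - q.1))
    (c : X) (d : X →L[ℝ] ℝ) (hcd : (c, d) ∈ T)
    (C D : ℝ) (hC : ‖c‖ ≤ C) (hD : ‖d‖ ≤ D)
    (r R b : ℝ) (hr : 0 < r) (hrR : r ≤ R)
    (x : X) (hx : ‖x‖ ≤ b)
    (Jrx : X) (hres : (Jrx, r⁻¹ • (J x - J Jrx)) ∈ T) :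
    ‖Jrx‖ ≤ max ((1 + C) * (b + R * D) + C) 1 := by
  have h0 := hmono _ hres _ hcd
  simp only [ContinuousLinearMap.sub_apply, ContinuousLinearMap.smul_apply,
    smul_eq_mul] at h0
  -- h0 : 0 ≤ r⁻¹ * ((J x - J Jrx) (Jrx - c)) - d (Jrx - c)
  have hA : d (Jrx - c) ≤ r⁻¹ * ((J x) (Jrx - c) - (J Jrx) (Jrx - c)) := by
    linarith
  have h2 : r * d (Jrx - c) ≤ (J x) (Jrx - c) - (J Jrx) (Jrx - c) := by
    have := mul_le_mul_of_nonneg_left hA hr.le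
    rwa [mul_inv_cancel_left₀ hr.ne'] at this
  have h3 : (J x) (Jrx - c) - (J Jrx) (Jrx - c)
      = (J x) Jrx - (J x) c - ‖Jrx‖ ^ 2 + (J Jrx) c := by
    simp [map_sub, hJdual]; ring
  rw [h3] at h2
  -- bounds
  have b1 : (J x) Jrx ≤ ‖x‖ * ‖Jrx‖ := by
    calc (J x) Jrx ≤ ‖(J x) Jrx‖ := le_abs_self _
    _ ≤ ‖J x‖ * ‖Jrx‖ := (J x).le_opNorm _
    _ = ‖x‖ * ‖Jrx‖ := by rw [hJnorm]
  have b2 : -((J x) c) ≤ ‖x‖ * ‖c‖ := by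
    calc -((J x) c) ≤ ‖(J x) c‖ := neg_le_abs _
    _ ≤ ‖J x‖ * ‖c‖ := (J x).le_opNorm _
    _ = ‖x‖ * ‖c‖ := by rw [hJnorm]
  have b3 : (J Jrx) c ≤ ‖Jrx‖ * ‖c‖ := by
    calc (J Jrx) c ≤ ‖(J Jrx) c‖ := le_abs_self _
    _ ≤ ‖J Jrx‖ * ‖c‖ := (J Jrx).le_opNorm _
    _ = ‖Jrx‖ * ‖c‖ := by rw [hJnorm]
  have b4 : -(d (Jrx - c)) ≤ ‖d‖ * (‖Jrx‖ + ‖c‖) := by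
    calc -(d (Jrx - c)) ≤ ‖d (Jrx - c)‖ := neg_le_abs _
    _ ≤ ‖d‖ * ‖Jrx - c‖ := d.le_opNorm _
    _ ≤ ‖d‖ * (‖Jrx‖ + ‖c‖) :=
      mul_le_mul_of_nonneg_left (norm_sub_le _ _) (norm_nonneg _)
  have hcn : (0:ℝ) ≤ ‖c‖ := norm_nonneg _
  have hxn : (0:ℝ) ≤ ‖x‖ := norm_nonneg _
  have hdn : (0:ℝ) ≤ ‖d‖ := norm_nonneg _
  have htn : (0:ℝ) ≤ ‖Jrx‖ := norm_nonneg _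
  have hrD : r * ‖d‖ ≤ R * D := mul_le_mul hrR hD hdn (hr.le.trans hrR)
  have hs : (0:ℝ) ≤ b + R * D := by nlinarith
  have hCn : (0:ℝ) ≤ C := hcn.trans hC
  have t1 : ‖x‖ * ‖Jrx‖ ≤ b * ‖Jrx‖ := mul_le_mul_of_nonneg_right hx htn
  have t2 : ‖x‖ * ‖c‖ ≤ b * C := mul_le_mul hx hC hcn (hxn.trans hx)
  have t3 : ‖Jrx‖ * ‖c‖ ≤ ‖Jrx‖ * C := mul_le_mul_of_nonneg_left hC htn
  have t4 : r * (-d (Jrx - c)) ≤ r * (‖d‖ * (‖Jrx‖ + ‖c‖)) :=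
    mul_le_mul_of_nonneg_left b4 hr.le
  have t5 : (r * ‖d‖) * (‖Jrx‖ + ‖c‖) ≤ (R * D) * (‖Jrx‖ + C) :=
    mul_le_mul hrD (add_le_add le_rfl hC) (by positivity)
      (le_trans (by positivity) hrD)
  have key : ‖Jrx‖ ^ 2 ≤ (b + R * D + C) * ‖Jrx‖ + C * (b + R * D) := by
    nlinarith [t1, t2, t3, t4, t5]
  by_cases h1 : ‖Jrx‖ ≤ 1
  · exact h1.trans (le_max_right _ _)
  · refine le_trans ?_ (le_max_left _ _)
    push_neg at h1
    nlinarith [key, h1, hs, hCn,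
      mul_nonneg (mul_nonneg hCn hs) (sub_nonneg.2 h1.le)]
end

section
/- Let z ∈ zer T, b ≥ φ(z, x₀), ᾱ with 1 > ᾱ > α_n for all n. Then for every ε > 0 there exists n ≤ 2⌈b/(ε(1−ᾱ))⌉ such that φ(J_{r_{2n}} x_{2n}, x_{2n}) ≤ ε. -/
theorem stmt_17 {X : Type*} [NormedAddCommGroup X] [NormedSpace ℝ X]
    (φ : X → X → ℝ) (hφnonneg : ∀ x y : X, 0 ≤ φ x y)
    (z : X) (x y : ℕ → X)
    (α : ℕ → ℝ) (ᾱ : ℝ) (hᾱ : ᾱ < 1) (hα : ∀ n, 0 ≤ α n ∧ α n < ᾱ)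
    (b : ℝ) (hb : φ z (x 0) ≤ b)
    (hdec : ∀ n, φ z (x (n + 1)) ≤ φ z (x n))
    (hkey : ∀ n, φ (y n) (x n) ≤ (φ z (x n) - φ z (x (n + 1))) / (1 - α n)) :
    ∀ ε : ℝ, 0 < ε → ∃ n ≤ 2 * ⌈b / (ε * (1 - ᾱ))⌉₊,
      φ (y (2 * n)) (x (2 * n)) ≤ ε := by
  intro ε hε
  set N := 2 * ⌈b / (ε * (1 - ᾱ))⌉₊ with hN
  by_contra h
  push_neg at h
  have h1ᾱ : 0 < 1 - ᾱ := by linarith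
  have hstep : ∀ n ≤ N, φ z (x (2 * n + 2)) ≤ φ z (x (2 * n)) - ε * (1 - ᾱ) := by
    intro n hn
    have hεlt := h n hn
    have hkey2 := hkey (2 * n)
    have hα2 := hα (2 * n)
    have hpos : 0 < 1 - α (2 * n) := by linarith [hα2.2]
    have h2 : ε * (1 - α (2 * n)) < φ z (x (2 * n)) - φ z (x (2 * n + 1)) := by
      have := lt_of_lt_of_le hεlt hkey2
      calc ε * (1 - α (2 * n)) < ((φ z (x (2 * n)) - φ z (x (2 * n + 1))) / (1 - α (2 * n))) * (1 - α (2 * n)) := by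
            exact mul_lt_mul_of_pos_right this hpos
        _ = φ z (x (2 * n)) - φ z (x (2 * n + 1)) := by field_simp
    have h3 : ε * (1 - ᾱ) ≤ ε * (1 - α (2 * n)) := by
      apply mul_le_mul_of_nonneg_left (by linarith [hα2.2]) hε.le
    have h4 := hdec (2 * n + 1)
    linarith
  have hiter : ∀ n ≤ N + 1, φ z (x (2 * n)) ≤ b - n * (ε * (1 - ᾱ)) := by
    intro n hn
    induction n with
    | zero => simpa using hb
    | succ k ih =>
      have hk : k ≤ N := by omega
      have := hstep k hk
      have ih' := ih (by omega)
      have : φ z (x (2 * (k + 1))) ≤ φ z (x (2 * k)) - ε * (1 - ᾱ) := by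
        have : 2 * (k + 1) = 2 * k + 2 := by ring
        rw [this]; exact hstep k hk
      push_cast
      push_cast at ih'
      linarith
  have hfinal := hiter (N + 1) le_rfl
  have hnn := hφnonneg z (x (2 * (N + 1)))
  have hNb : (N : ℝ) + 1 ≤ b / (ε * (1 - ᾱ)) := by
    have hεp : 0 < ε * (1 - ᾱ) := mul_pos hε h1ᾱ
    rw [le_div_iff₀ hεp]
    push_cast at hfinal
    linarith
  have hceil : b / (ε * (1 - ᾱ)) ≤ (⌈b / (ε * (1 - ᾱ))⌉₊ : ℝ) := Nat.le_ceil _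
  have : (N : ℝ) + 1 ≤ (⌈b / (ε * (1 - ᾱ))⌉₊ : ℝ) := le_trans hNb hceil
  have : N + 1 ≤ ⌈b / (ε * (1 - ᾱ))⌉₊ := by exact_mod_cast this
  omega
end

section
/- Suppose for all δ > 0 and n ∈ ℕ there exists N ∈ [n; τ(δ,n)] with |F(x_N)| < δ, ρ is a modulus of regularity for F w.r.t. zer F and S, (x_n) ⊆ S, and (x_n) is Fejér monotone w.r.t. zer F (d(p, x_{n+m}) ≤ d(p, x_n) for all p ∈ zer F and n,m). Then (x_n) is Cauchy, and for all δ > 0 and n,m ≥ τ(ρ(δ/2), 0): d(x_n, x_m) < δ. -/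
theorem stmt_18 {X : Type*} [MetricSpace X] (F : X → EReal) (S : Set X)
    (zerF : Set X) (hzer : zerF = {x | F x = 0}) (hne : zerF.Nonempty)
    (x : ℕ → X) (hxS : ∀ n, x n ∈ S)
    (τ : ℝ → ℕ → ℕ) (ρ : ℝ → ℝ)
    (hρpos : ∀ ε : ℝ, 0 < ε → 0 < ρ ε)
    (hρ : ∀ ε : ℝ, 0 < ε → ∀ y ∈ S,
      max (F y) (-F y) < ((ρ ε : ℝ) : EReal) → Metric.infDist y zerF < ε)
    (hτ : ∀ δ : ℝ, 0 < δ → ∀ n : ℕ, ∃ N, n ≤ N ∧ N ≤ τ δ n ∧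
      max (F (x N)) (-F (x N)) < ((δ : ℝ) : EReal))
    (hFej : ∀ p ∈ zerF, ∀ n m : ℕ, dist p (x (n + m)) ≤ dist p (x n)) :
    CauchySeq x ∧
      ∀ δ : ℝ, 0 < δ → ∀ n m : ℕ, τ (ρ (δ / 2)) 0 ≤ n → τ (ρ (δ / 2)) 0 ≤ m →
        dist (x n) (x m) < δ := by
  have key : ∀ δ : ℝ, 0 < δ → ∀ n m : ℕ, τ (ρ (δ / 2)) 0 ≤ n → τ (ρ (δ / 2)) 0 ≤ m →
      dist (x n) (x m) < δ := by
    intro δ hδ n m hn hm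
    have hδ2 : (0:ℝ) < δ / 2 := by linarith
    obtain ⟨N, hN0, hNτ, hF⟩ := hτ (ρ (δ / 2)) (hρpos _ hδ2) 0
    have hinf : Metric.infDist (x N) zerF < δ / 2 := hρ _ hδ2 _ (hxS N) hF
    obtain ⟨p, hp, hpd⟩ := (Metric.infDist_lt_iff hne).mp hinf
    have hbound : ∀ k : ℕ, N ≤ k → dist p (x k) < δ / 2 := by
      intro k hk
      have := hFej p hp N (k - N)
      rw [Nat.add_sub_cancel' hk] at this
      calc dist p (x k) ≤ dist p (x N) := this
        _ = dist (x N) p := dist_comm _ _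
        _ < δ / 2 := hpd
    have hn' : N ≤ n := le_trans hNτ hn
    have hm' : N ≤ m := le_trans hNτ hm
    calc dist (x n) (x m) ≤ dist (x n) p + dist p (x m) := dist_triangle _ _ _
      _ = dist p (x n) + dist p (x m) := by rw [dist_comm]
      _ < δ / 2 + δ / 2 := add_lt_add (hbound n hn') (hbound m hm')
      _ = δ := by ring
  refine ⟨Metric.cauchySeq_iff.mpr fun ε hε => ?_, key⟩
  exact ⟨τ (ρ (ε / 2)) 0, fun m hm n hn => key ε hε m n hm hn⟩
end
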